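/- (Kawashima–Shizuta condition for Ruggeri's first model, key step of Theorem 2.) For every λ ∈ ℝ and every nonzero vector v ∈ ℝ⁶ satisfying (B − λA)v = 0, one has L·v ≠ 0; that is, no eigenvector of B relative to A lies in the kernel of L. -/

import Mathlib

open Matrix

theorem Matrix.apply_eq_zero_of_diagonal_mulVec_eq_zero {n R : Type*} [Fintype n] [DecidableEq n]
    [Semiring R] [NoZeroDivisors R] {d v : n → R} (h : diagonal d *ᵥ v = 0) {i : n}
    (hi : d i ≠ 0) : v i = 0 := by
  have hi' : d i * v i = 0 := by simpa only [mulVec_diagonal, Pi.zero_apply] using congrFun h i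
  exact (mul_eq_zero.mp hi').resolve_left hi

noncomputable section

namespace RuggeriFirstModel

/-- The Hessian `D²X⁰`; coordinates `3, 4, 5` are the relaxation variables. -/
def hessianX0 (θ pψ τ0 τ1 τ2 pψψ pθψ pθθ : ℝ) : Matrix (Fin 6) (Fin 6) ℝ :=
  !![θ⁻¹ * pψψ, 0, -pψ + θ * pθψ, 0, 0, 0;
     0, pψ, 0, 0, 0, 0;
     -pψ + θ * pθψ, 0, θ * pθθ, 0, 0, 0;
     0, 0, 0, τ1 * θ⁻¹ * pψ, 0, 0;
     0, 0, 0, 0, τ2 * θ⁻¹ * pψ, 0;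
     0, 0, 0, 0, 0, τ0 * θ⁻¹ * pψ]

def hessianX1 (θ pψ pθ : ℝ) : Matrix (Fin 6) (Fin 6) ℝ :=
  !![0, pψ, 0, 0, 0, 0;
     pψ, 0, θ^2 * pθ, θ, θ, 0;
     0, θ^2 * pθ, 0, 0, 0, θ^2;
     0, θ, 0, 0, 0, 0;
     0, θ, 0, 0, 0, 0;
     0, 0, θ^2, 0, 0, 0]

def sourceJacobian (η ζ χ : ℝ) : Matrix (Fin 6) (Fin 6) ℝ :=
  diagonal ![0, 0, 0, -1/(2*η), -1/(3*ζ), -1/χ]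

theorem relaxation_coords_eq_zero_of_mulVec_eq_zero {η ζ χ : ℝ}
    (hη : η ≠ 0) (hζ : ζ ≠ 0) (hχ : χ ≠ 0) {v : Fin 6 → ℝ} (h : sourceJacobian η ζ χ *ᵥ v = 0) :
    v 3 = 0 ∧ v 4 = 0 ∧ v 5 = 0 :=
  ⟨apply_eq_zero_of_diagonal_mulVec_eq_zero h (i := 3) (by simp [hη]),
    apply_eq_zero_of_diagonal_mulVec_eq_zero h (i := 4) (by simp [hζ]),
    apply_eq_zero_of_diagonal_mulVec_eq_zero h (i := 5) (by simp [hχ])⟩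

/-- On rows `3`, `5` and `1`, `A` only sees the relaxation coordinates, while `B` couples
them to `v 1`, `v 2`, `v 0` with the invertible weights `θ`, `θ²`, `pψ`. -/
theorem eq_zero_of_eigen_of_relaxation_coords_eq_zero
    {θ pψ τ0 τ1 τ2 pψψ pθψ pθθ pθ lam : ℝ} (hθ : θ ≠ 0) (hpψ : pψ ≠ 0) {v : Fin 6 → ℝ}
    (heig : (hessianX1 θ pψ pθ - lam • hessianX0 θ pψ τ0 τ1 τ2 pψψ pθψ pθθ) *ᵥ v = 0)
    (h3 : v 3 = 0) (h4 : v 4 = 0) (h5 : v 5 = 0) : v = 0 := by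
  have row1 := congrFun heig 1
  have row3 := congrFun heig 3
  have row5 := congrFun heig 5
  simp only [hessianX0, hessianX1, mulVec, dotProduct, Fin.sum_univ_six, Matrix.sub_apply,
    Matrix.smul_apply, smul_eq_mul, of_apply, cons_val', empty_val', cons_val, Pi.zero_apply,
    h3, h4, h5] at row1 row3 row5
  have h1 : v 1 = 0 := by
    have : θ * v 1 = 0 := by linarith
    exact (mul_eq_zero.mp this).resolve_left hθ
  have h2 : v 2 = 0 := by
    have : θ ^ 2 * v 2 = 0 := by rw [h1] at row5; linarith
    exact (mul_eq_zero.mp this).resolve_left (pow_ne_zero 2 hθ)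
  have h0 : v 0 = 0 := by
    have : pψ * v 0 = 0 := by rw [h1, h2] at row1; linarith
    exact (mul_eq_zero.mp this).resolve_left hpψ
  funext i
  fin_cases i <;> assumption

end RuggeriFirstModel

end

open RuggeriFirstModel in
theorem kawashima_condition
    (θ pψ τ0 τ1 τ2 η ζ χ : ℝ)
    (hθ : 0 < θ) (hpψ : 0 < pψ)
    (hη : 0 < η) (hζ : 0 < ζ) (hχ : 0 < χ)
    (pψψ pθψ pθθ pθ : ℝ)
    (A B L : Matrix (Fin 6) (Fin 6) ℝ)
    (hA : A = !![θ⁻¹ * pψψ, 0, -pψ + θ * pθψ, 0, 0, 0;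
                 0, pψ, 0, 0, 0, 0;
                 -pψ + θ * pθψ, 0, θ * pθθ, 0, 0, 0;
                 0, 0, 0, τ1 * θ⁻¹ * pψ, 0, 0;
                 0, 0, 0, 0, τ2 * θ⁻¹ * pψ, 0;
                 0, 0, 0, 0, 0, τ0 * θ⁻¹ * pψ])
    (hB : B = !![0, pψ, 0, 0, 0, 0;
                 pψ, 0, θ^2 * pθ, θ, θ, 0;
                 0, θ^2 * pθ, 0, 0, 0, θ^2;
                 0, θ, 0, 0, 0, 0;
                 0, θ, 0, 0, 0, 0;
                 0, 0, θ^2, 0, 0, 0])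
    (hL : L = Matrix.diagonal ![0, 0, 0, -1/(2*η), -1/(3*ζ), -1/χ])
    (lam : ℝ) (v : Fin 6 → ℝ) (hv : v ≠ 0)
    (heig : (B - lam • A).mulVec v = 0) :
    L.mulVec v ≠ 0 := by
  intro hLv
  change A = hessianX0 θ pψ τ0 τ1 τ2 pψψ pθψ pθθ at hA
  change B = hessianX1 θ pψ pθ at hB
  change L = sourceJacobian η ζ χ at hL
  subst hA hB hL
  obtain ⟨h3, h4, h5⟩ := relaxation_coords_eq_zero_of_mulVec_eq_zero hη.ne' hζ.ne' hχ.ne' hLv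
  exact hv <|
    eq_zero_of_eigen_of_relaxation_coords_eq_zero hθ.ne' hpψ.ne' heig h3 h4 h5
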